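/- The stratification claim fails in ECC: with C := (Prop × Prop) × Prop, A := (Prop × Type_0) × Prop, and B := (Prop × Type_0) × Type_0 (all written as nested Σ-types), one has C ⪯ A ≺_1 B but C ⪯_1 A does not hold. -/

import Mathlib

namespace ECC

/-- Terms of Luo's Extended Calculus of Constructions, in de Bruijn representation. -/
inductive Term : Type
  | var   : ℕ → Term
  | prop  : Term
  | type  : ℕ → Term
  | pi    : Term → Term → Term
  | sigma : Term → Term → Term
  | lam   : Term → Term → Term
  | app   : Term → Term → Term
  | pair  : Term → Term → Term → Term   -- ⟨M, N⟩_B with type annotation B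
  | proj1 : Term → Term
  | proj2 : Term → Term
deriving DecidableEq

/-- Lift (shift by `d`) all de Bruijn indices ≥ `k`. -/
def lift (d : ℕ) : ℕ → Term → Term
  | k, .var n       => if n < k then .var n else .var (n + d)
  | _, .prop        => .prop
  | _, .type j      => .type j
  | k, .pi A B      => .pi (lift d k A) (lift d (k+1) B)
  | k, .sigma A B   => .sigma (lift d k A) (lift d (k+1) B)
  | k, .lam A M     => .lam (lift d k A) (lift d (k+1) M)
  | k, .app M N     => .app (lift d k M) (lift d k N)
  | k, .pair M N B  => .pair (lift d k M) (lift d k N) (lift d k B)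
  | k, .proj1 M     => .proj1 (lift d k M)
  | k, .proj2 M     => .proj2 (lift d k M)

/-- Capture-avoiding substitution `[N/x]A` of the term `N` for the variable `x` in `A`. -/
def subst (N : Term) : ℕ → Term → Term
  | k, .var n       => if n < k then .var n else if n = k then lift k 0 N else .var (n - 1)
  | _, .prop        => .prop
  | _, .type j      => .type j
  | k, .pi A B      => .pi (subst N k A) (subst N (k+1) B)
  | k, .sigma A B   => .sigma (subst N k A) (subst N (k+1) B)
  | k, .lam A M     => .lam (subst N k A) (subst N (k+1) M)
  | k, .app M M'    => .app (subst N k M) (subst N k M')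
  | k, .pair M M' B => .pair (subst N k M) (subst N k M') (subst N k B)
  | k, .proj1 M     => .proj1 (subst N k M)
  | k, .proj2 M     => .proj2 (subst N k M)

/-- `[N/x₀]B` : substitution for the outermost bound variable. -/
def subst0 (B N : Term) : Term := subst N 0 B

/-- One-step reduction (β together with the projection reductions, closed under all
term-formation congruences). -/
inductive Red : Term → Term → Prop
  | beta    : Red (.app (.lam A M) N) (subst0 M N)
  | pr1     : Red (.proj1 (.pair M N B)) M
  | pr2     : Red (.proj2 (.pair M N B)) N
  | piL     : Red A A' → Red (.pi A B) (.pi A' B)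
  | piR     : Red B B' → Red (.pi A B) (.pi A B')
  | sigmaL  : Red A A' → Red (.sigma A B) (.sigma A' B)
  | sigmaR  : Red B B' → Red (.sigma A B) (.sigma A B')
  | lamL    : Red A A' → Red (.lam A M) (.lam A' M)
  | lamR    : Red M M' → Red (.lam A M) (.lam A M')
  | appL    : Red M M' → Red (.app M N) (.app M' N)
  | appR    : Red N N' → Red (.app M N) (.app M N')
  | pairL   : Red M M' → Red (.pair M N B) (.pair M' N B)
  | pairR   : Red N N' → Red (.pair M N B) (.pair M N' B)
  | pairB   : Red B B' → Red (.pair M N B) (.pair M N B')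
  | proj1C  : Red M M' → Red (.proj1 M) (.proj1 M')
  | proj2C  : Red M M' → Red (.proj2 M) (.proj2 M')

/-- Conversion `≃` : the equivalence relation generated by reduction. -/
def Conv : Term → Term → Prop := Relation.EqvGen Red

/-- `A` has a normal form. -/
def HasNF (A : Term) : Prop :=
  ∃ B, Relation.ReflTransGen Red A B ∧ ∀ C, ¬ Red B C

/-- `𝒯` : the set of normalisable terms. -/
def Tset : Set Term := {A | HasNF A}

/-- Universes are `Prop` and the `Type_j`. -/
def IsUniv (T : Term) : Prop := T = .prop ∨ ∃ j, T = .type j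

/-- The cumulativity relation `⪯` : the smallest preorder containing conversion,
the universe order, congruence for Π in the codomain, and congruence for Σ in both
components. -/
inductive Cum : Term → Term → Prop
  | conv     : Conv A B → Cum A B
  | propType : Cum .prop (.type 0)
  | typeType : j ≤ k → Cum (.type j) (.type k)
  | pi       : Conv A A' → Cum B B' → Cum (.pi A B) (.pi A' B')
  | sigma    : Cum A A' → Cum B B' → Cum (.sigma A B) (.sigma A' B')
  | trans    : Cum A B → Cum B C → Cum A C

/-- The strict cumulativity relation `≺` : `A ⪯ B` and `A ≄ B`. -/
def SCum (A B : Term) : Prop := Cum A B ∧ ¬ Conv A B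

/-- The stratified cumulativity relations `⪯ᵢ`. -/
inductive CumL : ℕ → Term → Term → Prop
  | conv     : Conv A B → CumL i A B
  | propType : CumL i .prop (.type j)
  | typeType : j < k → CumL i (.type j) (.type k)
  | succ     : CumL i A B → CumL (i+1) A B
  | pi       : Conv M (.pi A B) → Conv N (.pi A' B') → Conv A A' → CumL i B B' →
               CumL (i+1) M N
  | sigma    : Conv M (.sigma A B) → Conv N (.sigma A' B') → CumL i A A' → CumL i B B' →
               CumL (i+1) M N

/-- Strict stratified cumulativity `≺ᵢ`. -/
def SCumL (i : ℕ) (A B : Term) : Prop := CumL i A B ∧ ¬ Conv A B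

/-- Is the outermost symbol of a term Π or Σ? -/
def BinderHeaded : Term → Prop
  | .pi _ _    => True
  | .sigma _ _ => True
  | _          => False

/-- The base stratum: normalisable terms not convertible to a binder-headed
normalisable term. -/
def Base : Set Term :=
  {T | HasNF T ∧ ¬ ∃ B, HasNF B ∧ BinderHeaded B ∧ Conv T B}

/-- The stratification `(Π_n, Σ_n)` of `𝒯`. -/
def Strata : ℕ → Set Term × Set Term
  | 0 => (Base, Base)
  | n+1 =>
    ({T | ∃ k l, ∃ _ : k + l = n, ∃ A B, HasNF (Term.pi A B) ∧ Conv T (Term.pi A B) ∧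
        A ∈ (Strata k).1 ∪ (Strata k).2 ∧ B ∈ (Strata l).1 ∪ (Strata l).2},
     {T | ∃ k l, ∃ _ : k + l = n, ∃ A B, HasNF (Term.sigma A B) ∧ Conv T (Term.sigma A B) ∧
        A ∈ (Strata k).1 ∪ (Strata k).2 ∧ B ∈ (Strata l).1 ∪ (Strata l).2})
termination_by n => n
decreasing_by all_goals omega

/-- The stratum `Π_n`. -/
def PiStr (n : ℕ) : Set Term := (Strata n).1

/-- The stratum `Σ_n`. -/
def SigStr (n : ℕ) : Set Term := (Strata n).2

/-- The specification of the rank function `φ : 𝒯 → ω`. -/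
def PhiSpec (φ : Term → ℕ) : Prop :=
  (∀ M N, HasNF M → HasNF N → Conv M N → φ M = φ N) ∧
  (∀ T, HasNF T → Conv T .prop → φ T = 2) ∧
  (∀ T j, HasNF T → Conv T (.type j) → φ T = 3 + j) ∧
  (∀ T, T ∈ PiStr 0 → ¬ Conv T .prop → (∀ j, ¬ Conv T (.type j)) → φ T = 1) ∧
  (∀ T A B, HasNF T → (Conv T (.pi A B) ∨ Conv T (.sigma A B)) → φ T = φ A * φ B) ∧
  (∀ T, HasNF T → 0 < φ T)

mutual
/-- Valid contexts of ECC (de Bruijn: the head of the list is the most recent entry). -/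
inductive Valid : List Term → Prop
  | nil  : Valid []
  | cons : Typing Γ A (.type j) → Valid (A :: Γ)

/-- The typing judgement `Γ ⊢ M : A` of ECC. -/
inductive Typing : List Term → Term → Term → Prop
  | prop  : Valid Γ → Typing Γ .prop (.type 0)
  | type  : Valid Γ → Typing Γ (.type j) (.type (j+1))
  | var   : Valid Γ → Γ[n]? = some A → Typing Γ (.var n) (lift (n+1) 0 A)
  | pi1   : Typing Γ A (.type j) → Typing (A :: Γ) B .prop →
            Typing Γ (.pi A B) .prop
  | pi2   : Typing Γ A (.type j) → Typing (A :: Γ) B (.type j) →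
            Typing Γ (.pi A B) (.type j)
  | sig   : Typing Γ A (.type j) → Typing (A :: Γ) B (.type j) →
            Typing Γ (.sigma A B) (.type j)
  | lam   : Typing (A :: Γ) M B → Typing Γ (.lam A M) (.pi A B)
  | app   : Typing Γ M (.pi A B) → Typing Γ N A → Typing Γ (.app M N) (subst0 B N)
  | pair  : Typing Γ M A → Typing Γ N (subst0 B M) → Typing (A :: Γ) B (.type j) →
            Typing Γ (.pair M N (.sigma A B)) (.sigma A B)
  | proj1 : Typing Γ M (.sigma A B) → Typing Γ (.proj1 M) A
  | proj2 : Typing Γ M (.sigma A B) → Typing Γ (.proj2 M) (subst0 B (.proj1 M))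
  | cum   : Typing Γ M A → Typing Γ B (.type j) → Cum A B → Typing Γ M B
end

/-- `Type_j` for `j ∈ ℤ`, with the convention `Type_{-1} = Prop`. -/
def TType (j : ℤ) : Term := if j < 0 then .prop else .type j.toNat

/-- The typing judgement of the restricted system `ECC⁻`: the rules
`(Π2)(Σ)(app)(pair)(⪯)` of ECC are replaced by `(Π2')(Σ')(app')(pair')` and `(≃)_ρ`. -/
inductive TypingM : List Term → Term → Term → Prop
  | prop  : Valid Γ → TypingM Γ .prop (.type 0)
  | type  : Valid Γ → TypingM Γ (.type j) (.type (j+1))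
  | var   : Valid Γ → Γ[n]? = some A → TypingM Γ (.var n) (lift (n+1) 0 A)
  | pi1   : TypingM Γ A (.type j) → TypingM (A :: Γ) B .prop →
            TypingM Γ (.pi A B) .prop
  | pi2'  : TypingM Γ A (TType j) → TypingM (A :: Γ) B (TType k) → 0 ≤ k →
            TypingM Γ (.pi A B) (TType (max (max j k) 0))
  | sig'  : TypingM Γ A (TType j) → TypingM (A :: Γ) B (TType k) →
            TypingM Γ (.sigma A B) (TType (max (max j k) 0))
  | lam   : TypingM (A :: Γ) M B → TypingM Γ (.lam A M) (.pi A B)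
  | app'  : TypingM Γ M (.pi A B) → TypingM Γ N A' → Cum A' A →
            TypingM Γ (.app M N) (subst0 B N)
  | pair' : TypingM Γ M A → TypingM Γ N C → TypingM (A' :: Γ) B' (.type j) →
            Cum A A' → Cum C (subst0 B' M) →
            TypingM Γ (.pair M N (.sigma A' B')) (.sigma A' B')
  | proj1 : TypingM Γ M (.sigma A B) → TypingM Γ (.proj1 M) A
  | proj2 : TypingM Γ M (.sigma A B) → TypingM Γ (.proj2 M) (subst0 B (.proj1 M))
  | conv  : TypingM Γ M A → Conv A A' → Typing Γ A' (.type j) → TypingM Γ M A'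

end ECC

/-!
A `⪯₁`-derivation between two Σ-types is either a conversion or compares the components
in `⪯₀`, and `⪯₀` relates a term that is not a universe only to terms convertible to it.
Terms built from `Prop`, `Type_j` and Σ are normal forms, so by Church–Rosser (proved with
Tait–Martin-Löf parallel reduction and Takahashi's complete development `cd`) two of them are
convertible only if they are equal. Hence `C ⪯₁ A` would identify the first components
`Prop × Prop` and `Prop × Type₀`, whereas `C ⪯ A` uses the Σ-rule twice.
-/

namespace ECC

open Relation

theorem lift_lift_comm (d e : ℕ) (M : Term) {k k' : ℕ} (h : k ≤ k') :
    lift d k (lift e k' M) = lift e (k' + d) (lift d k M) := by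
  induction M generalizing k k' <;> grind [lift]

theorem lift_lift_merge (d d' : ℕ) (M : Term) {k k' : ℕ} (h : k ≤ k') (h' : k' ≤ k + d) :
    lift d' k' (lift d k M) = lift (d + d') k M := by
  induction M generalizing k k' <;> grind [lift]

theorem lift_subst (d m : ℕ) (N M : Term) (j : ℕ) :
    lift d (j + m) (subst N j M) = subst (lift d m N) j (lift d (j + m + 1) M) := by
  induction M generalizing j <;> grind [lift, subst, lift_lift_comm]

theorem subst_lift_cancel (d : ℕ) (N M : Term) {k j : ℕ} (h : k ≤ j) (h' : j ≤ k + d) :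
    subst N j (lift (d + 1) k M) = lift d k M := by
  induction M generalizing k j <;> grind [lift, subst]

theorem subst_lift (d m : ℕ) (N P : Term) (c : ℕ) :
    subst N (c + d + m) (lift d c P) = lift d c (subst N (c + m) P) := by
  induction P generalizing c <;> grind [lift, subst, lift_lift_merge]

theorem subst_subst (m : ℕ) (N P M : Term) (i : ℕ) :
    subst N (i + m) (subst P i M) = subst (subst N m P) i (subst N (i + m + 1) M) := by
  induction M generalizing i with
  | var n =>
    have h := subst_lift i m N P 0
    rw [Nat.zero_add, Nat.zero_add] at h
    grind [subst, subst_lift_cancel]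
  | _ => grind [subst]

inductive Par : Term → Term → Prop
  | var   : Par (.var n) (.var n)
  | prop  : Par .prop .prop
  | type  : Par (.type j) (.type j)
  | pi    : Par A A' → Par B B' → Par (.pi A B) (.pi A' B')
  | sigma : Par A A' → Par B B' → Par (.sigma A B) (.sigma A' B')
  | lam   : Par A A' → Par M M' → Par (.lam A M) (.lam A' M')
  | app   : Par M M' → Par N N' → Par (.app M N) (.app M' N')
  | pair  : Par M M' → Par N N' → Par B B' → Par (.pair M N B) (.pair M' N' B')
  | proj1 : Par M M' → Par (.proj1 M) (.proj1 M')
  | proj2 : Par M M' → Par (.proj2 M) (.proj2 M')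
  | beta  : Par M M' → Par N N' → Par (.app (.lam A M) N) (subst0 M' N')
  | pr1   : Par M M' → Par (.proj1 (.pair M N B)) M'
  | pr2   : Par N N' → Par (.proj2 (.pair M N B)) N'

theorem Par.refl (M : Term) : Par M M := by
  induction M <;> constructor <;> assumption

theorem Red.par {M N : Term} (h : Red M N) : Par M N := by
  induction h <;> constructor <;> first | assumption | exact Par.refl _

theorem Par.lift (d : ℕ) {M M' : Term} (h : Par M M') (k : ℕ) :
    Par (lift d k M) (lift d k M') := by
  induction h generalizing k with
  | var => simp only [ECC.lift]; split_ifs <;> exact .var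
  | @beta _ M' _ N' _ _ _ ihM ihN =>
    have e := lift_subst d k N' M' 0
    rw [Nat.zero_add] at e
    simp only [ECC.lift, subst0, e]
    exact .beta (ihM _) (ihN _)
  | _ => simp only [ECC.lift]; constructor <;> apply_assumption

theorem Par.subst {P P' M M' : Term} (hP : Par P P') (h : Par M M') (k : ℕ) :
    Par (subst P k M) (subst P' k M') := by
  induction h generalizing k with
  | var => simp only [ECC.subst]; split_ifs <;> first | exact .var | exact hP.lift _ _
  | @beta _ M' _ N' _ _ _ ihM ihN =>
    have e := subst_subst k P' N' M' 0
    rw [Nat.zero_add] at e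
    simp only [ECC.subst, subst0, e]
    exact .beta (ihM _) (ihN _)
  | _ => simp only [ECC.subst]; constructor <;> apply_assumption

def cd : Term → Term
  | .pi A B => .pi (cd A) (cd B)
  | .sigma A B => .sigma (cd A) (cd B)
  | .lam A M => .lam (cd A) (cd M)
  | .app (.lam _ M) N => subst0 (cd M) (cd N)
  | .app M N => .app (cd M) (cd N)
  | .pair M N B => .pair (cd M) (cd N) (cd B)
  | .proj1 (.pair M _ _) => cd M
  | .proj1 M => .proj1 (cd M)
  | .proj2 (.pair _ N _) => cd N
  | .proj2 M => .proj2 (cd M)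
  | M => M

theorem Par.to_cd {M N : Term} (h : Par M N) : Par N (cd M) := by
  induction h with
  | @app M M' N N' hM _ ihM ihN =>
    cases M
    case lam A P =>
      cases hM
      simp only [cd] at ihM ⊢
      cases ihM with
      | lam _ hP => exact .beta hP ihN
    all_goals exact .app ihM ihN
  | @proj1 M M' hM ihM =>
    cases M
    case pair =>
      cases hM
      simp only [cd] at ihM ⊢
      cases ihM with
      | pair hM _ _ => exact .pr1 hM
    all_goals exact .proj1 ihM
  | @proj2 M M' hM ihM =>
    cases M
    case pair =>
      cases hM
      simp only [cd] at ihM ⊢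
      cases ihM with
      | pair _ hN _ => exact .pr2 hN
    all_goals exact .proj2 ihM
  | beta _ _ ihM ihN => exact Par.subst ihN ihM 0
  | pr1 _ ih => exact ih
  | pr2 _ ih => exact ih
  | _ => constructor <;> assumption

abbrev Joinable : Term → Term → Prop := Join (ReflTransGen Par)

theorem joinable_equivalence : Equivalence Joinable :=
  equivalence_join_reflTransGen fun M _ _ h₁ h₂ => ⟨cd M, .single h₁.to_cd, .single h₂.to_cd⟩

theorem Conv.refl (M : Term) : Conv M M := EqvGen.refl M

theorem Conv.joinable {M N : Term} (h : Conv M N) : Joinable M N :=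
  joinable_equivalence.eqvGen_iff.1 (EqvGen.mono (fun _ N hr => ⟨N, .single hr.par, .refl⟩) _ _ h)

theorem reflTransGen_par_sigma {A B X : Term} (h : ReflTransGen Par (.sigma A B) X) :
    ∃ A' B', X = .sigma A' B' ∧ ReflTransGen Par A A' ∧ ReflTransGen Par B B' := by
  induction h with
  | refl => exact ⟨A, B, rfl, .refl, .refl⟩
  | tail _ hX ih =>
    obtain ⟨A', B', rfl, hA, hB⟩ := ih
    cases hX with
    | sigma hA' hB' => exact ⟨_, _, rfl, hA.tail hA', hB.tail hB'⟩

theorem reflTransGen_par_pi {A B X : Term} (h : ReflTransGen Par (.pi A B) X) :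
    ∃ A' B', X = .pi A' B' := by
  induction h with
  | refl => exact ⟨A, B, rfl⟩
  | tail _ hX ih =>
    obtain ⟨A', B', rfl⟩ := ih
    cases hX
    exact ⟨_, _, rfl⟩

theorem Joinable.sigma_inj {A B A' B' : Term} (h : Joinable (.sigma A B) (.sigma A' B')) :
    Joinable A A' ∧ Joinable B B' := by
  obtain ⟨X, h, h'⟩ := h
  obtain ⟨A₁, B₁, rfl, hA, hB⟩ := reflTransGen_par_sigma h
  obtain ⟨A₂, B₂, he, hA', hB'⟩ := reflTransGen_par_sigma h'
  cases he
  exact ⟨⟨A₁, hA, hA'⟩, ⟨B₁, hB, hB'⟩⟩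

theorem not_joinable_sigma_pi {A B A' B' : Term} : ¬ Joinable (.sigma A B) (.pi A' B') := by
  rintro ⟨X, h, h'⟩
  obtain ⟨_, _, rfl, -⟩ := reflTransGen_par_sigma h
  obtain ⟨_, _, he⟩ := reflTransGen_par_pi h'
  cases he

inductive Ground : Term → Prop
  | prop : Ground .prop
  | type (j : ℕ) : Ground (.type j)
  | sigma : Ground A → Ground B → Ground (.sigma A B)

theorem Ground.eq_of_par {M X : Term} (hM : Ground M) (h : Par M X) : X = M := by
  induction hM generalizing X with
  | sigma _ _ ihA ihB =>
    cases h with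
    | sigma hA hB => rw [ihA hA, ihB hB]
  | _ => cases h; rfl

theorem Ground.eq_of_reflTransGen {M X : Term} (hM : Ground M) (h : ReflTransGen Par M X) :
    X = M := by
  induction h with
  | refl => rfl
  | tail _ hX ih => subst ih; exact hM.eq_of_par hX

theorem Ground.eq_of_joinable {M N : Term} (hM : Ground M) (hN : Ground N) (h : Joinable M N) :
    M = N := by
  obtain ⟨X, h, h'⟩ := h
  rw [← hM.eq_of_reflTransGen h, hN.eq_of_reflTransGen h']

theorem Ground.not_isUniv_of_joinable {S A : Term} (hS : Ground S) (hSU : ¬ IsUniv S)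
    (h : Joinable S A) : ¬ IsUniv A := by
  rintro (rfl | ⟨j, rfl⟩)
  · exact hSU (.inl (hS.eq_of_joinable .prop h))
  · exact hSU (.inr ⟨j, hS.eq_of_joinable (.type j) h⟩)

theorem CumL.conv_of_zero {M N : Term} (h : CumL 0 M N) (hM : ¬ IsUniv M) : Conv M N := by
  cases h with
  | conv h => exact h
  | propType => exact absurd (.inl rfl) hM
  | typeType _ => exact absurd (.inr ⟨_, rfl⟩) hM

theorem not_cumL_one_sigma {S S' T T' : Term} (hS : Ground S) (hS' : Ground S') (hne : S ≠ S')
    (hSU : ¬ IsUniv S) : ¬ CumL 1 (.sigma S T) (.sigma S' T') := by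
  have not_conv : ¬ Conv (.sigma S T) (.sigma S' T') := fun h =>
    hne (hS.eq_of_joinable hS' h.joinable.sigma_inj.1)
  intro h
  cases h with
  | conv h => exact not_conv h
  | succ h => exact not_conv (h.conv_of_zero (by simp [IsUniv]))
  | pi hM _ _ _ => exact not_joinable_sigma_pi hM.joinable
  | sigma hM hN hA _ =>
    have hSA := hM.joinable.sigma_inj.1
    have hAA' := (hA.conv_of_zero (hS.not_isUniv_of_joinable hSU hSA)).joinable
    have hA'S' := joinable_equivalence.symm hN.joinable.sigma_inj.1
    exact hne (hS.eq_of_joinable hS' (joinable_equivalence.trans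
      (joinable_equivalence.trans hSA hAA') hA'S'))

end ECC

/-- the stratification claim fails in ECC.  With
`C := (Prop × Prop) × Prop`, `A := (Prop × Type₀) × Prop`, `B := (Prop × Type₀) × Type₀`
(written as nested Σ-types), one has `C ⪯ A ≺₁ B` but not `C ⪯₁ A`. -/
theorem stratification_claim_fails :
    let C : ECC.Term := .sigma (.sigma .prop .prop) .prop
    let A : ECC.Term := .sigma (.sigma .prop (.type 0)) .prop
    let B : ECC.Term := .sigma (.sigma .prop (.type 0)) (.type 0)
    ECC.Cum C A ∧ ECC.SCumL 1 A B ∧ ¬ ECC.CumL 1 C A := by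
  intro C A B
  have hA : ECC.Ground A := .sigma (.sigma .prop (.type 0)) .prop
  have hB : ECC.Ground B := .sigma (.sigma .prop (.type 0)) (.type 0)
  refine ⟨?_, ⟨?_, fun h => ?_⟩, ?_⟩
  · exact .sigma (.sigma (.conv (.refl _)) .propType) (.conv (.refl _))
  · exact .sigma (.refl _) (.refl _) (.conv (.refl _)) .propType
  · exact absurd (hA.eq_of_joinable hB h.joinable) (by decide)
  · exact ECC.not_cumL_one_sigma (.sigma .prop .prop) (.sigma .prop (.type 0)) (by decide)
      (by simp [ECC.IsUniv])
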